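/- Let k be an algebraically closed field of characteristic different from 3 and let Φ₀ := {[x:y:z] ∈ ℙ²(k) : x³ + y³ + z³ = xyz = 0}. For M ∈ GL₃(k), if the projective transformation of ℙ²(k) induced by M maps Φ₀ into itself, then the projective transformation induced by the inverse transpose M⁻ᵀ also maps Φ₀ into itself. (That is, the stabilizer in GL₃(k) of the set Φ₀ is stable under the outer automorphism M ↦ M⁻ᵀ.) -/

import Mathlib

open Matrix
open scoped LinearAlgebra.Projectivization

noncomputable section

/-- The flex scheme `Φ₀ = {[x:y:z] ∈ ℙ²(k) : x³ + y³ + z³ = xyz = 0}`. -/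
def flexScheme0 (k : Type*) [Field k] : Set (ℙ k (Fin 3 → k)) :=
  {P | P.rep 0 ^ 3 + P.rep 1 ^ 3 + P.rep 2 ^ 3 = 0 ∧ P.rep 0 * P.rep 1 * P.rep 2 = 0}

namespace FS7

variable {k : Type*} [Field k]

def Phi (v : Fin 3 → k) : Prop :=
  v 0 ^ 3 + v 1 ^ 3 + v 2 ^ 3 = 0 ∧ v 0 * v 1 * v 2 = 0

def PP (i : Fin 3) (μ : k) : Fin 3 → k := ![![0, 1, -μ], ![1, 0, -μ], ![1, -μ, 0]] i

lemma Phi_smul_iff {c : k} (hc : c ≠ 0) (v : Fin 3 → k) : Phi (c • v) ↔ Phi v := by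
  unfold Phi
  simp only [Pi.smul_apply, smul_eq_mul]
  constructor
  · rintro ⟨h1, h2⟩
    constructor
    · have h : c ^ 3 * (v 0 ^ 3 + v 1 ^ 3 + v 2 ^ 3) = 0 := by linear_combination h1
      rcases mul_eq_zero.mp h with h | h
      · exact absurd h (pow_ne_zero 3 hc)
      · exact h
    · have h : c ^ 3 * (v 0 * v 1 * v 2) = 0 := by linear_combination h2
      rcases mul_eq_zero.mp h with h | h
      · exact absurd h (pow_ne_zero 3 hc)
      · exact h
  · rintro ⟨h1, h2⟩
    exact ⟨by linear_combination c ^ 3 * h1, by linear_combination c ^ 3 * h2⟩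

lemma classify {v : Fin 3 → k} (hv : v ≠ 0) (h : Phi v) :
    ∃ (i : Fin 3) (c μ : k), c ≠ 0 ∧ μ ^ 3 = 1 ∧ v = c • PP i μ := by
  obtain ⟨h1, h2⟩ := h
  have hvi : ¬(v 0 = 0 ∧ v 1 = 0 ∧ v 2 = 0) := by
    rintro ⟨a, b, c⟩
    exact hv (funext fun i => by fin_cases i <;> assumption)
  rcases mul_eq_zero.mp h2 with h0 | hz2
  · rcases mul_eq_zero.mp h0 with hz0 | hz1
    · -- v 0 = 0
      have hv1 : v 1 ≠ 0 := by
        intro hz1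
        have : v 2 ^ 3 = 0 := by linear_combination h1 - v 0 ^ 2 * hz0 - v 1 ^ 2 * hz1
        exact hvi ⟨hz0, hz1, pow_eq_zero_iff (by norm_num) |>.mp this⟩
      refine ⟨0, v 1, -(v 2) / v 1, hv1, ?_, ?_⟩
      · have : v 2 ^ 3 = -(v 1 ^ 3) := by linear_combination h1 - v 0 ^ 2 * hz0
        field_simp
        linear_combination -this
      · funext i
        fin_cases i <;> simp [PP, hz0] <;> field_simp
    · -- v 1 = 0
      have hv0 : v 0 ≠ 0 := by
        intro hz0
        have : v 2 ^ 3 = 0 := by linear_combination h1 - v 0 ^ 2 * hz0 - v 1 ^ 2 * hz1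
        exact hvi ⟨hz0, hz1, pow_eq_zero_iff (by norm_num) |>.mp this⟩
      refine ⟨1, v 0, -(v 2) / v 0, hv0, ?_, ?_⟩
      · have : v 2 ^ 3 = -(v 0 ^ 3) := by linear_combination h1 - v 1 ^ 2 * hz1
        field_simp
        linear_combination -this
      · funext i
        fin_cases i <;> simp [PP, hz1] <;> field_simp
  · -- v 2 = 0
    have hv0 : v 0 ≠ 0 := by
      intro hz0
      have : v 1 ^ 3 = 0 := by linear_combination h1 - v 0 ^ 2 * hz0 - v 2 ^ 2 * hz2
      exact hvi ⟨hz0, pow_eq_zero_iff (by norm_num) |>.mp this, hz2⟩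
    refine ⟨2, v 0, -(v 1) / v 0, hv0, ?_, ?_⟩
    · have : v 1 ^ 3 = -(v 0 ^ 3) := by linear_combination h1 - v 2 ^ 2 * hz2
      field_simp
      linear_combination -this
    · funext i
      fin_cases i <;> simp [PP, hz2] <;> field_simp

end FS7

namespace FS7

variable {k : Type*} [Field k]

lemma omega_pow3 {ω : k} (hω : ω ^ 2 + ω + 1 = 0) : ω ^ 3 = 1 := by
  linear_combination (ω - 1) * hω

lemma cuberoots {ω x : k} (hω : ω ^ 2 + ω + 1 = 0) (hx : x ^ 3 = 1) :
    x = 1 ∨ x = ω ∨ x = ω ^ 2 := by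
  have hω3 := omega_pow3 hω
  have h : (x - 1) * ((x - ω) * (x - ω ^ 2)) = 0 := by
    linear_combination hx + (-x ^ 2 + x) * hω + (x - 1) * hω3
  rcases mul_eq_zero.mp h with h | h
  · exact Or.inl (sub_eq_zero.mp h)
  rcases mul_eq_zero.mp h with h | h
  · exact Or.inr (Or.inl (sub_eq_zero.mp h))
  · exact Or.inr (Or.inr (sub_eq_zero.mp h))

lemma sym3 {a b c : k} (ha : a ^ 3 = 1) (hb : b ^ 3 = 1) (hc : c ^ 3 = 1)
    (hab : a ≠ b) (hac : a ≠ c) (hbc : b ≠ c) :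
    a + b + c = 0 ∧ a * b + a * c + b * c = 0 ∧ a * b * c = 1 := by
  have habq : (a - b) * (a ^ 2 + a * b + b ^ 2) = 0 := by linear_combination ha - hb
  have hbcq : (b - c) * (b ^ 2 + b * c + c ^ 2) = 0 := by linear_combination hb - hc
  have h1 : a ^ 2 + a * b + b ^ 2 = 0 :=
    (mul_eq_zero.mp habq).resolve_left (sub_ne_zero.mpr hab)
  have h2 : b ^ 2 + b * c + c ^ 2 = 0 :=
    (mul_eq_zero.mp hbcq).resolve_left (sub_ne_zero.mpr hbc)
  have he1 : (a - c) * (a + b + c) = 0 := by linear_combination h1 - h2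
  have e1 : a + b + c = 0 := (mul_eq_zero.mp he1).resolve_left (sub_ne_zero.mpr hac)
  have e2 : a * b + a * c + b * c = 0 := by linear_combination (a + b) * e1 - h1
  refine ⟨e1, e2, ?_⟩
  linear_combination a * e2 - a ^ 2 * e1 + ha

lemma mem3 {α : Type*} {p q r a b c x : α} (ha : a = p ∨ a = q ∨ a = r)
    (hb : b = p ∨ b = q ∨ b = r) (hc : c = p ∨ c = q ∨ c = r) (hx : x = p ∨ x = q ∨ x = r)
    (hab : a ≠ b) (hac : a ≠ c) (hbc : b ≠ c) (hxa : x ≠ a) (hxb : x ≠ b) : x = c := by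
  rcases ha with rfl | rfl | rfl <;> rcases hb with rfl | rfl | rfl <;>
    rcases hc with rfl | rfl | rfl <;> rcases hx with rfl | rfl | rfl <;> tauto

def Rl (x t : Fin 3 → k) : Prop := ∃ c : k, c ≠ 0 ∧ x = c • t

lemma Rl_trans {x y t : Fin 3 → k} (hx : Rl x t) (hy : Rl y t) : Rl x y := by
  obtain ⟨c, hc, rfl⟩ := hx
  obtain ⟨d, hd, rfl⟩ := hy
  exact ⟨c / d, div_ne_zero hc hd, by rw [smul_smul, div_mul_cancel₀ _ hd]⟩

lemma pigeon {x0 x1 x2 t0 t1 t2 : Fin 3 → k}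
    (h0 : Rl x0 t0 ∨ Rl x0 t1 ∨ Rl x0 t2)
    (h1 : Rl x1 t0 ∨ Rl x1 t1 ∨ Rl x1 t2)
    (h2 : Rl x2 t0 ∨ Rl x2 t1 ∨ Rl x2 t2)
    (n01 : ¬ Rl x0 x1) (n02 : ¬ Rl x0 x2) (n12 : ¬ Rl x1 x2) :
    (Rl x0 t0 ∨ Rl x1 t0 ∨ Rl x2 t0) ∧ (Rl x0 t1 ∨ Rl x1 t1 ∨ Rl x2 t1) ∧
      (Rl x0 t2 ∨ Rl x1 t2 ∨ Rl x2 t2) := by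
  rcases h0 with H0 | H0 | H0 <;> rcases h1 with H1 | H1 | H1 <;> rcases h2 with H2 | H2 | H2 <;>
    first
      | exact absurd (Rl_trans H0 H1) n01
      | exact absurd (Rl_trans H0 H2) n02
      | exact absurd (Rl_trans H1 H2) n12
      | exact ⟨by tauto, by tauto, by tauto⟩

end FS7

namespace FS7

variable {k : Type*} [Field k]

lemma Rl_same {i : Fin 3} {c d μ : k} (hc : c ≠ 0) (hd : d ≠ 0) :
    Rl (c • PP i μ) (d • (PP i μ : Fin 3 → k)) :=
  ⟨c / d, div_ne_zero hc hd, by rw [smul_smul, div_mul_cancel₀ _ hd]⟩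

/-- two distinct Φ₀-points with the same zero coordinate `i` force the line `u` to be
the `i`-th coordinate line -/
lemma same_line {i : Fin 3} {u : Fin 3 → k} {c d μ ν : k} (hc : c ≠ 0) (hd : d ≠ 0)
    (hne : ¬ Rl (c • PP i μ) (d • (PP i ν : Fin 3 → k)))
    (du : u 0 * (c • PP i μ : Fin 3 → k) 0 + u 1 * (c • PP i μ : Fin 3 → k) 1
        + u 2 * (c • PP i μ : Fin 3 → k) 2 = 0)
    (dv : u 0 * (d • PP i ν : Fin 3 → k) 0 + u 1 * (d • PP i ν : Fin 3 → k) 1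
        + u 2 * (d • PP i ν : Fin 3 → k) 2 = 0) :
    ∀ r, r ≠ i → u r = 0 := by
  have hμν : μ ≠ ν := by
    rintro rfl
    exact hne (Rl_same hc hd)
  have hsub : ν - μ ≠ 0 := sub_ne_zero.mpr (Ne.symm hμν)
  fin_cases i <;>
    simp only [PP, Pi.smul_apply, smul_eq_mul, Matrix.cons_val_zero, Matrix.cons_val_one,
      Matrix.head_cons, Matrix.cons_val_two, Matrix.tail_cons, Fin.mk_zero, Fin.mk_one, Fin.reduceFinMk] at du dv
  · -- i = 0 : u 1 = μ u 2 and u 1 = ν u 2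
    have h1 : u 1 - μ * u 2 = 0 :=
      mul_left_cancel₀ hc (b := u 1 - μ * u 2) (c := 0) (by linear_combination du)
    have h2 : u 1 - ν * u 2 = 0 :=
      mul_left_cancel₀ hd (b := u 1 - ν * u 2) (c := 0) (by linear_combination dv)
    have hu2 : u 2 = 0 := by
      have : (ν - μ) * u 2 = 0 := by linear_combination h1 - h2
      exact (mul_eq_zero.mp this).resolve_left hsub
    have hu1 : u 1 = 0 := by rw [hu2] at h1; linear_combination h1
    intro r hr
    fin_cases r <;> simp_all
  · -- i = 1 : u 0 = μ u 2
    have h1 : u 0 - μ * u 2 = 0 :=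
      mul_left_cancel₀ hc (b := u 0 - μ * u 2) (c := 0) (by linear_combination du)
    have h2 : u 0 - ν * u 2 = 0 :=
      mul_left_cancel₀ hd (b := u 0 - ν * u 2) (c := 0) (by linear_combination dv)
    have hu2 : u 2 = 0 := by
      have : (ν - μ) * u 2 = 0 := by linear_combination h1 - h2
      exact (mul_eq_zero.mp this).resolve_left hsub
    have hu0 : u 0 = 0 := by rw [hu2] at h1; linear_combination h1
    intro r hr
    fin_cases r <;> simp_all
  · -- i = 2 : u 0 = μ u 1
    have h1 : u 0 - μ * u 1 = 0 :=
      mul_left_cancel₀ hc (b := u 0 - μ * u 1) (c := 0) (by linear_combination du)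
    have h2 : u 0 - ν * u 1 = 0 :=
      mul_left_cancel₀ hd (b := u 0 - ν * u 1) (c := 0) (by linear_combination dv)
    have hu1 : u 1 = 0 := by
      have : (ν - μ) * u 1 = 0 := by linear_combination h1 - h2
      exact (mul_eq_zero.mp this).resolve_left hsub
    have hu0 : u 0 = 0 := by rw [hu1] at h1; linear_combination h1
    intro r hr
    fin_cases r <;> simp_all

lemma trans_line {u : Fin 3 → k} {c0 c1 c2 α β γ : k} (hc0 : c0 ≠ 0) (hc1 : c1 ≠ 0)
    (hc2 : c2 ≠ 0) (hu : u ≠ 0)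
    (d0 : u 0 * (c0 • PP 0 α : Fin 3 → k) 0 + u 1 * (c0 • PP 0 α : Fin 3 → k) 1
        + u 2 * (c0 • PP 0 α : Fin 3 → k) 2 = 0)
    (d1 : u 0 * (c1 • PP 1 β : Fin 3 → k) 0 + u 1 * (c1 • PP 1 β : Fin 3 → k) 1
        + u 2 * (c1 • PP 1 β : Fin 3 → k) 2 = 0)
    (d2 : u 0 * (c2 • PP 2 γ : Fin 3 → k) 0 + u 1 * (c2 • PP 2 γ : Fin 3 → k) 1
        + u 2 * (c2 • PP 2 γ : Fin 3 → k) 2 = 0) :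
    u 2 ≠ 0 ∧ u 1 = α * u 2 ∧ u 0 = α * γ * u 2 := by
  simp only [PP, Pi.smul_apply, smul_eq_mul, Matrix.cons_val_zero, Matrix.cons_val_one,
    Matrix.head_cons, Matrix.cons_val_two, Matrix.tail_cons] at d0 d1 d2
  have h1 : u 1 = α * u 2 := by
    have h := mul_left_cancel₀ hc0 (b := u 1 - α * u 2) (c := 0) (by linear_combination d0)
    linear_combination h
  have h0 : u 0 = γ * u 1 := by
    have h := mul_left_cancel₀ hc2 (b := u 0 - γ * u 1) (c := 0) (by linear_combination d2)
    linear_combination h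
  have hu2 : u 2 ≠ 0 := by
    intro h2z
    apply hu
    funext r
    fin_cases r <;> simp [h0, h1, h2z]
  exact ⟨hu2, h1, by rw [h0, h1]; ring⟩

end FS7

namespace FS7

variable {k : Type*} [Field k]

lemma fin3cases (i : Fin 3) : i = 0 ∨ i = 1 ∨ i = 2 := by omega

lemma line_class {u x y z : Fin 3 → k} (hu : u ≠ 0)
    (hx : x ≠ 0) (hy : y ≠ 0) (hz : z ≠ 0) (phx : Phi x) (phy : Phi y) (phz : Phi z)
    (nxy : ¬ Rl x y) (nxz : ¬ Rl x z) (nyz : ¬ Rl y z)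
    (dx : u 0 * x 0 + u 1 * x 1 + u 2 * x 2 = 0)
    (dy : u 0 * y 0 + u 1 * y 1 + u 2 * y 2 = 0)
    (dz : u 0 * z 0 + u 1 * z 1 + u 2 * z 2 = 0) :
    (∃ j, ∀ r, r ≠ j → u r = 0) ∨
      (∃ α γ : k, α ^ 3 = 1 ∧ γ ^ 3 = 1 ∧ u 2 ≠ 0 ∧ u 1 = α * u 2 ∧ u 0 = α * γ * u 2) := by
  obtain ⟨ix, cx, μx, hcx, hμx, rfl⟩ := classify hx phx
  obtain ⟨iy, cy, μy, hcy, hμy, rfl⟩ := classify hy phy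
  obtain ⟨iz, cz, μz, hcz, hμz, rfl⟩ := classify hz phz
  rcases fin3cases ix with rfl | rfl | rfl <;> rcases fin3cases iy with rfl | rfl | rfl <;>
    rcases fin3cases iz with rfl | rfl | rfl
  · exact Or.inl ⟨_, same_line hcx hcy nxy dx dy⟩
  · exact Or.inl ⟨_, same_line hcx hcy nxy dx dy⟩
  · exact Or.inl ⟨_, same_line hcx hcy nxy dx dy⟩
  · exact Or.inl ⟨_, same_line hcx hcz nxz dx dz⟩
  · exact Or.inl ⟨_, same_line hcy hcz nyz dy dz⟩
  · exact Or.inr ⟨μx, μz, hμx, hμz, trans_line hcx hcy hcz hu dx dy dz⟩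
  · exact Or.inl ⟨_, same_line hcx hcz nxz dx dz⟩
  · exact Or.inr ⟨μx, μy, hμx, hμy, trans_line hcx hcz hcy hu dx dz dy⟩
  · exact Or.inl ⟨_, same_line hcy hcz nyz dy dz⟩
  · exact Or.inl ⟨_, same_line hcy hcz nyz dy dz⟩
  · exact Or.inl ⟨_, same_line hcx hcz nxz dx dz⟩
  · exact Or.inr ⟨μy, μz, hμy, hμz, trans_line hcy hcx hcz hu dy dx dz⟩
  · exact Or.inl ⟨_, same_line hcx hcy nxy dx dy⟩
  · exact Or.inl ⟨_, same_line hcx hcy nxy dx dy⟩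
  · exact Or.inl ⟨_, same_line hcx hcy nxy dx dy⟩
  · exact Or.inr ⟨μz, μy, hμz, hμy, trans_line hcz hcx hcy hu dz dx dy⟩
  · exact Or.inl ⟨_, same_line hcx hcz nxz dx dz⟩
  · exact Or.inl ⟨_, same_line hcy hcz nyz dy dz⟩
  · exact Or.inl ⟨_, same_line hcy hcz nyz dy dz⟩
  · exact Or.inr ⟨μy, μx, hμy, hμx, trans_line hcy hcz hcx hu dy dz dx⟩
  · exact Or.inl ⟨_, same_line hcx hcz nxz dx dz⟩
  · exact Or.inr ⟨μz, μx, hμz, hμx, trans_line hcz hcy hcx hu dz dy dx⟩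
  · exact Or.inl ⟨_, same_line hcy hcz nyz dy dz⟩
  · exact Or.inl ⟨_, same_line hcx hcz nxz dx dz⟩
  · exact Or.inl ⟨_, same_line hcx hcy nxy dx dy⟩
  · exact Or.inl ⟨_, same_line hcx hcy nxy dx dy⟩
  · exact Or.inl ⟨_, same_line hcx hcy nxy dx dy⟩

end FS7

namespace FS7

variable {k : Type*} [Field k]

lemma cube_ne_zero {μ : k} (hμ : μ ^ 3 = 1) : μ ≠ 0 := by
  intro h
  rw [h] at hμ
  simp at hμ

lemma Phi_PP {i : Fin 3} {μ : k} (hμ : μ ^ 3 = 1) : Phi (PP i μ : Fin 3 → k) := by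
  rcases fin3cases i with rfl | rfl | rfl <;> constructor <;>
    simp only [PP, Matrix.cons_val_zero, Matrix.cons_val_one, Matrix.head_cons,
      Matrix.cons_val_two, Matrix.tail_cons] <;>
    first
      | linear_combination -hμ
      | ring

lemma PP_ne_zero {i : Fin 3} {μ : k} : (PP i μ : Fin 3 → k) ≠ 0 := by
  rcases fin3cases i with rfl | rfl | rfl <;> intro h
  · have := congrFun h 1
    simp only [PP, Matrix.cons_val_one, Matrix.head_cons, Pi.zero_apply] at this
    exact one_ne_zero this
  · have := congrFun h 0
    simp only [PP, Matrix.cons_val_zero, Matrix.cons_val_one, Matrix.head_cons,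
      Pi.zero_apply] at this
    exact one_ne_zero this
  · have := congrFun h 0
    simp only [PP, Matrix.cons_val_zero, Matrix.cons_val_one, Matrix.head_cons,
      Matrix.cons_val_two, Matrix.tail_cons, Pi.zero_apply] at this
    exact one_ne_zero this

lemma PP_self {i : Fin 3} {μ : k} : (PP i μ : Fin 3 → k) i = 0 := by
  rcases fin3cases i with rfl | rfl | rfl <;>
    simp only [PP, Matrix.cons_val_zero, Matrix.cons_val_one, Matrix.head_cons,
      Matrix.cons_val_two, Matrix.tail_cons]

lemma PP_off {i j : Fin 3} {μ : k} (hμ : μ ^ 3 = 1) (h : j ≠ i) : (PP i μ : Fin 3 → k) j ≠ 0 := by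
  have hμ0 : μ ≠ 0 := cube_ne_zero hμ
  rcases fin3cases i with rfl | rfl | rfl <;> rcases fin3cases j with rfl | rfl | rfl <;>
    simp only [PP, Matrix.cons_val_zero, Matrix.cons_val_one, Matrix.head_cons,
      Matrix.cons_val_two, Matrix.tail_cons, ne_eq, neg_eq_zero] <;>
    first
      | exact absurd rfl h
      | exact one_ne_zero
      | exact hμ0

lemma PP_nonprop_type {i i' : Fin 3} (h : i ≠ i') {μ μ' : k} (hμ' : μ' ^ 3 = 1) :
    ¬ Rl (PP i μ) (PP i' μ' : Fin 3 → k) := by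
  rintro ⟨c, hc, heq⟩
  have h1 := congrFun heq i
  rw [PP_self] at h1
  have h2 : (PP i' μ' : Fin 3 → k) i ≠ 0 := PP_off hμ' h
  simp only [Pi.smul_apply, smul_eq_mul] at h1
  exact h2 ((mul_eq_zero.mp h1.symm).resolve_left hc)

lemma PP_nonprop_mu {i : Fin 3} {μ μ' : k} (h : μ ≠ μ') :
    ¬ Rl (PP i μ) (PP i μ' : Fin 3 → k) := by
  rintro ⟨c, hc, heq⟩
  rcases fin3cases i with rfl | rfl | rfl
  · have h1 := congrFun heq 1
    have h2 := congrFun heq 2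
    simp only [PP, Matrix.cons_val_zero, Matrix.cons_val_one, Matrix.head_cons,
      Matrix.cons_val_two, Matrix.tail_cons, Pi.smul_apply, smul_eq_mul, mul_one] at h1 h2
    rw [← h1] at h2
    exact h (by linear_combination -h2)
  · have h1 := congrFun heq 0
    have h2 := congrFun heq 2
    simp only [PP, Matrix.cons_val_zero, Matrix.cons_val_one, Matrix.head_cons,
      Matrix.cons_val_two, Matrix.tail_cons, Pi.smul_apply, smul_eq_mul, mul_one] at h1 h2
    rw [← h1] at h2
    exact h (by linear_combination -h2)
  · have h1 := congrFun heq 0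
    have h2 := congrFun heq 1
    simp only [PP, Matrix.cons_val_zero, Matrix.cons_val_one, Matrix.head_cons,
      Matrix.cons_val_two, Matrix.tail_cons, Pi.smul_apply, smul_eq_mul, mul_one] at h1 h2
    rw [← h1] at h2
    exact h (by linear_combination -h2)

lemma trans_points {u x : Fin 3 → k} {α γ : k} (hα : α ^ 3 = 1)
    (hu2 : u 2 ≠ 0) (h1 : u 1 = α * u 2) (h0 : u 0 = α * γ * u 2)
    (hx : x ≠ 0) (phx : Phi x)
    (dx : u 0 * x 0 + u 1 * x 1 + u 2 * x 2 = 0) :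
    Rl x (PP 0 α) ∨ Rl x (PP 1 (α * γ)) ∨ Rl x (PP 2 γ) := by
  have hα0 : α ≠ 0 := cube_ne_zero hα
  obtain ⟨i, c, μ, hc, hμ, rfl⟩ := classify hx phx
  rcases fin3cases i with rfl | rfl | rfl <;>
    simp only [PP, Pi.smul_apply, smul_eq_mul, Matrix.cons_val_zero, Matrix.cons_val_one,
      Matrix.head_cons, Matrix.cons_val_two, Matrix.tail_cons] at dx
  · left
    have hd : c * (u 2 * (α - μ)) = 0 := by linear_combination dx - c * h1
    have := sub_eq_zero.mp ((mul_eq_zero.mp ((mul_eq_zero.mp hd).resolve_left hc)).resolve_left hu2)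
    exact ⟨c, hc, by rw [this]⟩
  · right; left
    have hd : c * (u 2 * (α * γ - μ)) = 0 := by linear_combination dx - c * h0
    have := sub_eq_zero.mp ((mul_eq_zero.mp ((mul_eq_zero.mp hd).resolve_left hc)).resolve_left hu2)
    exact ⟨c, hc, by rw [this]⟩
  · right; right
    have hd : c * (α * (u 2 * (γ - μ))) = 0 := by linear_combination dx - c * h0 + c * μ * h1
    have := sub_eq_zero.mp ((mul_eq_zero.mp ((mul_eq_zero.mp
      ((mul_eq_zero.mp hd).resolve_left hc)).resolve_left hα0)).resolve_left hu2)
    exact ⟨c, hc, by rw [this]⟩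

end FS7

namespace FS7

variable {k : Type*} [Field k]

section ids

variable {a0 a1 a2 τ x y z y0 y1 y2 : k}

lemma cube_of_e (e1 : a0 + a1 + a2 = 0) (e2 : a0 * a1 + a0 * a2 + a1 * a2 = 0)
    (e3 : a0 * a1 * a2 = 1) : a0 ^ 3 = 1 ∧ a1 ^ 3 = 1 ∧ a2 ^ 3 = 1 := by
  refine ⟨?_, ?_, ?_⟩
  · linear_combination a0 ^ 2 * e1 - a0 * e2 + e3
  · linear_combination a1 ^ 2 * e1 - a1 * e2 + e3
  · linear_combination a2 ^ 2 * e1 - a2 * e2 + e3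

lemma id3 (e1 : a0 + a1 + a2 = 0) (e2 : a0 * a1 + a0 * a2 + a1 * a2 = 0)
    (e3 : a0 * a1 * a2 = 1) (hτ : τ ^ 3 = 1) :
    (τ * a0 ^ 2 * x + a0 * y + z) ^ 3 + (τ * a1 ^ 2 * x + a1 * y + z) ^ 3
      + (τ * a2 ^ 2 * x + a2 * y + z) ^ 3 = 3 * (x ^ 3 + y ^ 3 + z ^ 3) + 18 * τ * (x * y * z) := by
  obtain ⟨ha0, ha1, ha2⟩ := cube_of_e e1 e2 e3
  have hp2 : a0 ^ 2 + a1 ^ 2 + a2 ^ 2 = 0 := by linear_combination (a0 + a1 + a2) * e1 - 2 * e2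
  have hp3 : a0 ^ 3 + a1 ^ 3 + a2 ^ 3 = 3 := by linear_combination ha0 + ha1 + ha2
  have hp4 : a0 ^ 4 + a1 ^ 4 + a2 ^ 4 = 0 := by
    linear_combination a0 * ha0 + a1 * ha1 + a2 * ha2 + e1
  have hp5 : a0 ^ 5 + a1 ^ 5 + a2 ^ 5 = 0 := by
    linear_combination a0 ^ 2 * ha0 + a1 ^ 2 * ha1 + a2 ^ 2 * ha2 + hp2
  have hp6 : a0 ^ 6 + a1 ^ 6 + a2 ^ 6 = 3 := by
    linear_combination (a0 ^ 3 + 1) * ha0 + (a1 ^ 3 + 1) * ha1 + (a2 ^ 3 + 1) * ha2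
  linear_combination (τ ^ 3 * x ^ 3) * hp6 + 3 * x ^ 3 * hτ + y ^ 3 * hp3
    + 3 * τ ^ 2 * x ^ 2 * y * hp5 + 3 * τ ^ 2 * x ^ 2 * z * hp4 + 3 * τ * x * y ^ 2 * hp4
    + 3 * y ^ 2 * z * hp2 + 3 * τ * x * z ^ 2 * hp2 + 3 * y * z ^ 2 * e1
    + 6 * τ * x * y * z * hp3

lemma id4 (e1 : a0 + a1 + a2 = 0) (e2 : a0 * a1 + a0 * a2 + a1 * a2 = 0)
    (e3 : a0 * a1 * a2 = 1) (hτ : τ ^ 3 = 1) :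
    (τ * a0 ^ 2 * x + a0 * y + z) * ((τ * a1 ^ 2 * x + a1 * y + z)
      * (τ * a2 ^ 2 * x + a2 * y + z)) = x ^ 3 + y ^ 3 + z ^ 3 - 3 * τ * (x * y * z) := by
  linear_combination (x ^ 3 * (a0 * a1 * a2) ^ 2) * hτ + (x ^ 3 * (a0 * a1 * a2 + 1)) * e3
    + y ^ 3 * e3 + (τ ^ 2 * (a0 * a1 * a2) * x ^ 2 * y) * e2
    + (τ ^ 2 * (a0 * a1 + a0 * a2 + a1 * a2) * x ^ 2 * z) * e2
    - (2 * τ ^ 2 * (a0 * a1 * a2) * x ^ 2 * z) * e1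
    + (τ * (a0 * a1 * a2) * x * y ^ 2) * e1 + (y ^ 2 * z) * e2
    + (τ * (a0 + a1 + a2) * x * z ^ 2) * e1 - (2 * τ * x * z ^ 2) * e2
    + (y * z ^ 2) * e1 + (τ * (a0 * a1 + a0 * a2 + a1 * a2) * x * y * z) * e1
    - (3 * τ * x * y * z) * e3

lemma id1 (e1 : a0 + a1 + a2 = 0) (e2 : a0 * a1 + a0 * a2 + a1 * a2 = 0)
    (e3 : a0 * a1 * a2 = 1) :
    (a0 ^ 2 * y0 + a1 ^ 2 * y1 + a2 ^ 2 * y2) ^ 3 + (a0 * y0 + a1 * y1 + a2 * y2) ^ 3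
      + (y0 + y1 + y2) ^ 3 = 3 * (y0 ^ 3 + y1 ^ 3 + y2 ^ 3) + 18 * (y0 * y1 * y2) := by
  obtain ⟨ha0, ha1, ha2⟩ := cube_of_e e1 e2 e3
  linear_combination ((a0 ^ 3 + 2) * y0 ^ 3) * ha0 + ((a1 ^ 3 + 2) * y1 ^ 3) * ha1
    + ((a2 ^ 3 + 2) * y2 ^ 3) * ha2
    + (3 * a0 * a1 ^ 2 * y0 ^ 2 * y1) * ha0 + (3 * a0 * a1 * y0 ^ 2 * y1) * e1
    - (3 * y0 ^ 2 * y1) * e3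
    + (3 * a0 * a2 ^ 2 * y0 ^ 2 * y2) * ha0 + (3 * a0 * a2 * y0 ^ 2 * y2) * e1
    - (3 * y0 ^ 2 * y2) * e3
    + (3 * a1 * a0 ^ 2 * y1 ^ 2 * y0) * ha1 + (3 * a1 * a0 * y1 ^ 2 * y0) * e1
    - (3 * y1 ^ 2 * y0) * e3
    + (3 * a1 * a2 ^ 2 * y1 ^ 2 * y2) * ha1 + (3 * a1 * a2 * y1 ^ 2 * y2) * e1
    - (3 * y1 ^ 2 * y2) * e3
    + (3 * a2 * a0 ^ 2 * y2 ^ 2 * y0) * ha2 + (3 * a2 * a0 * y2 ^ 2 * y0) * e1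
    - (3 * y2 ^ 2 * y0) * e3
    + (3 * a2 * a1 ^ 2 * y2 ^ 2 * y1) * ha2 + (3 * a2 * a1 * y2 ^ 2 * y1) * e1
    - (3 * y2 ^ 2 * y1) * e3
    + (6 * (a0 * a1 * a2 + 2) * y0 * y1 * y2) * e3

lemma id2 (e1 : a0 + a1 + a2 = 0) (e2 : a0 * a1 + a0 * a2 + a1 * a2 = 0)
    (e3 : a0 * a1 * a2 = 1) :
    (a0 ^ 2 * y0 + a1 ^ 2 * y1 + a2 ^ 2 * y2) * ((a0 * y0 + a1 * y1 + a2 * y2)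
      * (y0 + y1 + y2)) = (y0 ^ 3 + y1 ^ 3 + y2 ^ 3) - 3 * (y0 * y1 * y2) := by
  obtain ⟨ha0, ha1, ha2⟩ := cube_of_e e1 e2 e3
  linear_combination (y0 ^ 3) * ha0 + (y1 ^ 3) * ha1 + (y2 ^ 3) * ha2
    + (a0 * a1 * y0 ^ 2 * y1) * e1 - (y0 ^ 2 * y1) * e3 + (y0 ^ 2 * y1) * ha0
    + (a0 * a2 * y0 ^ 2 * y2) * e1 - (y0 ^ 2 * y2) * e3 + (y0 ^ 2 * y2) * ha0
    + (a1 * a0 * y1 ^ 2 * y0) * e1 - (y1 ^ 2 * y0) * e3 + (y1 ^ 2 * y0) * ha1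
    + (a1 * a2 * y1 ^ 2 * y2) * e1 - (y1 ^ 2 * y2) * e3 + (y1 ^ 2 * y2) * ha1
    + (a2 * a0 * y2 ^ 2 * y0) * e1 - (y2 ^ 2 * y0) * e3 + (y2 ^ 2 * y0) * ha2
    + (a2 * a1 * y2 ^ 2 * y1) * e1 - (y2 ^ 2 * y1) * e3 + (y2 ^ 2 * y1) * ha2
    + ((a0 * a1 + a0 * a2 + a1 * a2) * y0 * y1 * y2) * e1 - (3 * y0 * y1 * y2) * e3

end ids

lemma sum3_perm {a b c : Fin 3} (hab : a ≠ b) (hac : a ≠ c) (hbc : b ≠ c) (f : Fin 3 → k) :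
    f 0 + f 1 + f 2 = f a + f b + f c := by
  rcases fin3cases a with rfl | rfl | rfl <;> rcases fin3cases b with rfl | rfl | rfl <;>
    rcases fin3cases c with rfl | rfl | rfl <;>
      first | exact absurd rfl hab | exact absurd rfl hac | exact absurd rfl hbc | ring

lemma prod3_perm {a b c : Fin 3} (hab : a ≠ b) (hac : a ≠ c) (hbc : b ≠ c) (f : Fin 3 → k) :
    f 0 * f 1 * f 2 = f a * f b * f c := by
  rcases fin3cases a with rfl | rfl | rfl <;> rcases fin3cases b with rfl | rfl | rfl <;>
    rcases fin3cases c with rfl | rfl | rfl <;>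
      first | exact absurd rfl hab | exact absurd rfl hac | exact absurd rfl hbc | ring

lemma third_eq {ω a0 a1 a2 r s : k} (hω : ω ^ 2 + ω + 1 = 0)
    (ha0 : a0 ^ 3 = 1) (ha1 : a1 ^ 3 = 1) (ha2 : a2 ^ 3 = 1) (hr : r ^ 3 = 1) (hs : s ^ 3 = 1)
    (h01 : a0 ≠ a1) (h02 : a0 ≠ a2) (h12 : a1 ≠ a2)
    (hg0 : s * a2 ≠ r * a0) (hg1 : s * a2 ≠ r * a1) : s = r := by
  have hr0 : r ≠ 0 := cube_ne_zero hr
  have ha20 : a2 ≠ 0 := cube_ne_zero ha2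
  have c0 : (r * a0) ^ 3 = 1 := by rw [mul_pow, hr, ha0, one_mul]
  have c1 : (r * a1) ^ 3 = 1 := by rw [mul_pow, hr, ha1, one_mul]
  have c2 : (r * a2) ^ 3 = 1 := by rw [mul_pow, hr, ha2, one_mul]
  have cx : (s * a2) ^ 3 = 1 := by rw [mul_pow, hs, ha2, one_mul]
  have d01 : r * a0 ≠ r * a1 := fun h => h01 (mul_left_cancel₀ hr0 h)
  have d02 : r * a0 ≠ r * a2 := fun h => h02 (mul_left_cancel₀ hr0 h)
  have d12 : r * a1 ≠ r * a2 := fun h => h12 (mul_left_cancel₀ hr0 h)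
  have hx := mem3 (cuberoots hω c0) (cuberoots hω c1) (cuberoots hω c2) (cuberoots hω cx)
    d01 d02 d12 hg0 hg1
  exact mul_right_cancel₀ ha20 hx

end FS7

namespace FS7

theorem core {k : Type*} [Field k] [IsAlgClosed k] (h3 : (3 : k) ≠ 0)
    (M : Matrix (Fin 3) (Fin 3) k) (hM : IsUnit M.det)
    (hstab : ∀ v : Fin 3 → k, v ≠ 0 → Phi v → Phi (M.mulVec v)) :
    ∀ v : Fin 3 → k, Phi v → Phi ((M⁻¹)ᵀ.mulVec v) := by
  intro v hphiv
  obtain ⟨hv1, hv2⟩ := hphiv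
  -- a primitive cube root of unity
  obtain ⟨ω, hωr⟩ := IsAlgClosed.exists_root
    (p := (Polynomial.X ^ 2 + Polynomial.X + 1 : Polynomial k))
    (by
      have hdeg : (Polynomial.X ^ 2 + Polynomial.X + 1 : Polynomial k).degree = 2 := by
        compute_degree!
      rw [hdeg]; decide)
  have hω : ω ^ 2 + ω + 1 = 0 := by
    have := hωr
    simp only [Polynomial.IsRoot, Polynomial.eval_add, Polynomial.eval_pow,
      Polynomial.eval_X, Polynomial.eval_one] at this
    exact this
  have hω3 : ω ^ 3 = 1 := omega_pow3 hω
  have hω1 : ω ≠ 1 := by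
    intro h
    apply h3
    rw [h] at hω
    linear_combination hω
  have hωsq1 : ω ^ 2 ≠ 1 := fun h => hω1 (by linear_combination hω3 - ω * h)
  have hωω2 : ω ≠ ω ^ 2 := fun h => hωsq1 (by linear_combination ω * h + hω3)
  have hcω2 : (ω ^ 2) ^ 3 = 1 := by linear_combination (ω ^ 3 + 1) * hω3
  -- matrix basics
  have hMM : M⁻¹ * M = 1 := Matrix.nonsing_inv_mul M hM
  have hrec : ∀ x : Fin 3 → k, M⁻¹.mulVec (M.mulVec x) = x := by
    intro x
    rw [Matrix.mulVec_mulVec, hMM, Matrix.one_mulVec]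
  have hinj0 : ∀ x : Fin 3 → k, M.mulVec x = 0 → x = 0 := by
    intro x hx
    have h := hrec x
    rw [hx, Matrix.mulVec_zero] at h
    exact h.symm
  have hdot : ∀ (i : Fin 3) (x : Fin 3 → k),
      M⁻¹ i 0 * M.mulVec x 0 + M⁻¹ i 1 * M.mulVec x 1 + M⁻¹ i 2 * M.mulVec x 2 = x i := by
    intro i x
    have h := congrFun (hrec x) i
    rw [← h]
    simp only [Matrix.mulVec, dotProduct, Fin.sum_univ_three]
  have hX : ∀ r, (M⁻¹)ᵀ.mulVec v r = M⁻¹ 0 r * v 0 + M⁻¹ 1 r * v 1 + M⁻¹ 2 r * v 2 := by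
    intro r
    simp only [Matrix.mulVec, dotProduct, Fin.sum_univ_three, Matrix.transpose_apply]
  -- the images of the nine points
  have hq : ∀ (i : Fin 3) (μ : k), μ ^ 3 = 1 → Phi (M.mulVec (PP i μ)) :=
    fun i μ hμ => hstab _ PP_ne_zero (Phi_PP hμ)
  have hqne : ∀ (i : Fin 3) (μ : k), M.mulVec (PP i μ) ≠ 0 :=
    fun i μ h => PP_ne_zero (hinj0 _ h)
  have hRlM : ∀ (i i' : Fin 3) (μ ν : k),
      Rl (M.mulVec (PP i μ)) (M.mulVec (PP i' ν)) → Rl (PP i μ) (PP i' ν : Fin 3 → k) := by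
    rintro i i' μ ν ⟨c, hc, heq⟩
    refine ⟨c, hc, ?_⟩
    have hz : M.mulVec (PP i μ - c • PP i' ν) = 0 := by
      rw [Matrix.mulVec_sub, Matrix.mulVec_smul, heq, sub_self]
    have := hinj0 _ hz
    exact sub_eq_zero.mp this
  have hqnp_type : ∀ (i i' : Fin 3) (μ ν : k), ν ^ 3 = 1 → i ≠ i' →
      ¬ Rl (M.mulVec (PP i μ)) (M.mulVec (PP i' ν)) :=
    fun i i' μ ν hν hii h => PP_nonprop_type hii hν (hRlM _ _ _ _ h)
  have hqnp_mu : ∀ (i : Fin 3) (μ ν : k), μ ≠ ν →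
      ¬ Rl (M.mulVec (PP i μ)) (M.mulVec (PP i ν)) :=
    fun i μ ν hμν h => PP_nonprop_mu hμν (hRlM _ _ _ _ h)
  -- the rows of M⁻¹ are nonzero
  have hune : ∀ i : Fin 3, (fun r => M⁻¹ i r) ≠ (0 : Fin 3 → k) := by
    intro i h
    have hd := hdot i (Pi.single i 1)
    rw [congrFun h 0, congrFun h 1, congrFun h 2] at hd
    simp only [Pi.zero_apply, zero_mul, add_zero, zero_add, Pi.single_eq_same] at hd
    exact one_ne_zero hd.symm
  -- classification of each row of M⁻¹ as a line
  have hlc : ∀ i : Fin 3, (∃ j, ∀ r, r ≠ j → M⁻¹ i r = 0) ∨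
      (∃ α γ : k, α ^ 3 = 1 ∧ γ ^ 3 = 1 ∧ M⁻¹ i 2 ≠ 0 ∧ M⁻¹ i 1 = α * M⁻¹ i 2 ∧
        M⁻¹ i 0 = α * γ * M⁻¹ i 2) := by
    intro i
    exact line_class (u := fun r => M⁻¹ i r) (hune i)
      (hqne i 1) (hqne i ω) (hqne i (ω ^ 2))
      (hq i 1 (one_pow 3)) (hq i ω hω3) (hq i (ω ^ 2) hcω2)
      (hqnp_mu i 1 ω (Ne.symm hω1)) (hqnp_mu i 1 (ω ^ 2) (Ne.symm hωsq1))
      (hqnp_mu i ω (ω ^ 2) hωω2)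
      ((hdot i (PP i 1)).trans PP_self) ((hdot i (PP i ω)).trans PP_self)
      ((hdot i (PP i (ω ^ 2))).trans PP_self)
  -- mixed case is impossible
  have hmix : ∀ i0 i : Fin 3, i0 ≠ i → (∃ j, ∀ r, r ≠ j → M⁻¹ i0 r = 0) →
      (∃ α γ : k, α ^ 3 = 1 ∧ γ ^ 3 = 1 ∧ M⁻¹ i 2 ≠ 0 ∧ M⁻¹ i 1 = α * M⁻¹ i 2 ∧
        M⁻¹ i 0 = α * γ * M⁻¹ i 2) → False := by
    rintro i0 i hii ⟨j, hb⟩ ⟨α, γ, hα, hγ, hu2, h1u, h0u⟩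
    have m1 := trans_points hα hu2 h1u h0u (hqne i 1) (hq i 1 (one_pow 3))
      ((hdot i (PP i 1)).trans PP_self)
    have m2 := trans_points hα hu2 h1u h0u (hqne i ω) (hq i ω hω3)
      ((hdot i (PP i ω)).trans PP_self)
    have m3 := trans_points hα hu2 h1u h0u (hqne i (ω ^ 2)) (hq i (ω ^ 2) hcω2)
      ((hdot i (PP i (ω ^ 2))).trans PP_self)
    have pig := pigeon m1 m2 m3 (hqnp_mu i 1 ω (Ne.symm hω1))
      (hqnp_mu i 1 (ω ^ 2) (Ne.symm hωsq1)) (hqnp_mu i ω (ω ^ 2) hωω2)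
    -- q i μ has nonzero j-th coordinate
    have hqj : ∀ μ : k, μ ^ 3 = 1 → M.mulVec (PP i μ) j ≠ 0 := by
      intro μ hμ hz
      have hd := hdot i0 (PP i μ)
      have hPne : (PP i μ : Fin 3 → k) i0 ≠ 0 := PP_off hμ hii
      apply hPne
      rw [← hd]
      rcases fin3cases j with rfl | rfl | rfl
      · rw [hb 1 (by decide), hb 2 (by decide), hz]
        ring
      · rw [hb 0 (by decide), hb 2 (by decide), hz]
        ring
      · rw [hb 0 (by decide), hb 1 (by decide), hz]
        ring
    -- but some point of the line maps onto the target with zero j-th coordinate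
    rcases fin3cases j with rfl | rfl | rfl
    · rcases pig.1 with ⟨c, hc, he⟩ | ⟨c, hc, he⟩ | ⟨c, hc, he⟩ <;>
        [ exact hqj 1 (one_pow 3) (by rw [he, Pi.smul_apply, PP_self, smul_eq_mul, mul_zero]);
          exact hqj ω hω3 (by rw [he, Pi.smul_apply, PP_self, smul_eq_mul, mul_zero]);
          exact hqj (ω ^ 2) hcω2 (by rw [he, Pi.smul_apply, PP_self, smul_eq_mul, mul_zero])]
    · rcases pig.2.1 with ⟨c, hc, he⟩ | ⟨c, hc, he⟩ | ⟨c, hc, he⟩ <;>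
        [ exact hqj 1 (one_pow 3) (by rw [he, Pi.smul_apply, PP_self, smul_eq_mul, mul_zero]);
          exact hqj ω hω3 (by rw [he, Pi.smul_apply, PP_self, smul_eq_mul, mul_zero]);
          exact hqj (ω ^ 2) hcω2 (by rw [he, Pi.smul_apply, PP_self, smul_eq_mul, mul_zero])]
    · rcases pig.2.2 with ⟨c, hc, he⟩ | ⟨c, hc, he⟩ | ⟨c, hc, he⟩ <;>
        [ exact hqj 1 (one_pow 3) (by rw [he, Pi.smul_apply, PP_self, smul_eq_mul, mul_zero]);
          exact hqj ω hω3 (by rw [he, Pi.smul_apply, PP_self, smul_eq_mul, mul_zero]);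
          exact hqj (ω ^ 2) hcω2 (by rw [he, Pi.smul_apply, PP_self, smul_eq_mul, mul_zero])]
  rcases hlc 0 with hB0 | hT0 <;> rcases hlc 1 with hB1 | hT1 <;> rcases hlc 2 with hB2 | hT2
  · -- all basis: case A
    obtain ⟨j0, hb0⟩ := hB0
    obtain ⟨j1, hb1⟩ := hB1
    obtain ⟨j2, hb2⟩ := hB2
    have hcol0 : ∀ x : Fin 3 → k, M⁻¹ 0 j0 * M.mulVec x j0 = x 0 := by
      intro x
      have hd := hdot 0 x
      rcases fin3cases j0 with rfl | rfl | rfl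
      · rw [hb0 1 (by decide), hb0 2 (by decide)] at hd; linear_combination hd
      · rw [hb0 0 (by decide), hb0 2 (by decide)] at hd; linear_combination hd
      · rw [hb0 0 (by decide), hb0 1 (by decide)] at hd; linear_combination hd
    have hcol1 : ∀ x : Fin 3 → k, M⁻¹ 1 j1 * M.mulVec x j1 = x 1 := by
      intro x
      have hd := hdot 1 x
      rcases fin3cases j1 with rfl | rfl | rfl
      · rw [hb1 1 (by decide), hb1 2 (by decide)] at hd; linear_combination hd
      · rw [hb1 0 (by decide), hb1 2 (by decide)] at hd; linear_combination hd
      · rw [hb1 0 (by decide), hb1 1 (by decide)] at hd; linear_combination hd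
    have hcol2 : ∀ x : Fin 3 → k, M⁻¹ 2 j2 * M.mulVec x j2 = x 2 := by
      intro x
      have hd := hdot 2 x
      rcases fin3cases j2 with rfl | rfl | rfl
      · rw [hb2 1 (by decide), hb2 2 (by decide)] at hd; linear_combination hd
      · rw [hb2 0 (by decide), hb2 2 (by decide)] at hd; linear_combination hd
      · rw [hb2 0 (by decide), hb2 1 (by decide)] at hd; linear_combination hd
    have p010 : (PP 0 1 : Fin 3 → k) 0 = 0 := by simp [PP]
    have p011 : (PP 0 1 : Fin 3 → k) 1 = 1 := by simp [PP]
    have p012 : (PP 0 1 : Fin 3 → k) 2 = -1 := by simp [PP]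
    have p110 : (PP 1 1 : Fin 3 → k) 0 = 1 := by simp [PP]
    have p111 : (PP 1 1 : Fin 3 → k) 1 = 0 := by simp [PP]
    have p112 : (PP 1 1 : Fin 3 → k) 2 = -1 := by simp [PP]
    have p211 : (PP 2 1 : Fin 3 → k) 1 = -1 := by simp [PP]
    have p212 : (PP 2 1 : Fin 3 → k) 2 = 0 := by simp [PP]
    have A01 : M⁻¹ 0 j0 * M.mulVec (PP 0 1) j0 = 0 := by rw [hcol0, p010]
    have A11 : M⁻¹ 1 j1 * M.mulVec (PP 0 1) j1 = 1 := by rw [hcol1, p011]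
    have A21 : M⁻¹ 2 j2 * M.mulVec (PP 0 1) j2 = -1 := by rw [hcol2, p012]
    have B01 : M⁻¹ 0 j0 * M.mulVec (PP 1 1) j0 = 1 := by rw [hcol0, p110]
    have B11 : M⁻¹ 1 j1 * M.mulVec (PP 1 1) j1 = 0 := by rw [hcol1, p111]
    have B21 : M⁻¹ 2 j2 * M.mulVec (PP 1 1) j2 = -1 := by rw [hcol2, p112]
    have C11 : M⁻¹ 1 j1 * M.mulVec (PP 2 1) j1 = -1 := by rw [hcol1, p211]
    have C21 : M⁻¹ 2 j2 * M.mulVec (PP 2 1) j2 = 0 := by rw [hcol2, p212]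
    have A21' : (-(M⁻¹ 2 j2)) * M.mulVec (PP 0 1) j2 = 1 := by linear_combination -A21
    have B21' : (-(M⁻¹ 2 j2)) * M.mulVec (PP 1 1) j2 = 1 := by linear_combination -B21
    have C11' : (-(M⁻¹ 1 j1)) * M.mulVec (PP 2 1) j1 = 1 := by linear_combination -C11
    have hk0 : M⁻¹ 0 j0 ≠ 0 := left_ne_zero_of_mul_eq_one B01
    have hk1 : M⁻¹ 1 j1 ≠ 0 := left_ne_zero_of_mul_eq_one A11
    have hk2 : M⁻¹ 2 j2 ≠ 0 := neg_ne_zero.mp (left_ne_zero_of_mul_eq_one A21')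
    have hz1 : M.mulVec (PP 0 1) j0 = 0 := (mul_eq_zero.mp A01).resolve_left hk0
    have hz2 : M.mulVec (PP 1 1) j1 = 0 := (mul_eq_zero.mp B11).resolve_left hk1
    have hz3 : M.mulVec (PP 2 1) j2 = 0 := (mul_eq_zero.mp C21).resolve_left hk2
    have hn11 : M.mulVec (PP 0 1) j1 ≠ 0 := right_ne_zero_of_mul_eq_one A11
    have hn12 : M.mulVec (PP 0 1) j2 ≠ 0 := right_ne_zero_of_mul_eq_one A21'
    have hn20 : M.mulVec (PP 1 1) j0 ≠ 0 := right_ne_zero_of_mul_eq_one B01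
    have hn22 : M.mulVec (PP 1 1) j2 ≠ 0 := right_ne_zero_of_mul_eq_one B21'
    have hn31 : M.mulVec (PP 2 1) j1 ≠ 0 := right_ne_zero_of_mul_eq_one C11'
    have hj01 : j0 ≠ j1 := by
      intro h
      apply hn11
      rw [← h]
      exact hz1
    have hj02 : j0 ≠ j2 := by
      intro h
      apply hn12
      rw [← h]
      exact hz1
    have hj12 : j1 ≠ j2 := by
      intro h
      apply hn31
      rw [h]
      exact hz3
    -- cube relations
    have hS1 := (hq 0 1 (one_pow 3)).1
    have hperm1 := sum3_perm hj01 hj02 hj12 (fun r => M.mulVec (PP 0 1) r ^ 3)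
    have hsumA : M.mulVec (PP 0 1) j1 ^ 3 + M.mulVec (PP 0 1) j2 ^ 3 = 0 := by
      rw [hperm1, hz1] at hS1
      linear_combination hS1
    have hS2 := (hq 1 1 (one_pow 3)).1
    have hperm2 := sum3_perm hj01 hj02 hj12 (fun r => M.mulVec (PP 1 1) r ^ 3)
    have hsumB : M.mulVec (PP 1 1) j0 ^ 3 + M.mulVec (PP 1 1) j2 ^ 3 = 0 := by
      rw [hperm2, hz2] at hS2
      linear_combination hS2
    have hA3 : M⁻¹ 1 j1 ^ 3 * M.mulVec (PP 0 1) j1 ^ 3 = 1 := by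
      rw [← mul_pow, A11, one_pow]
    have hA3' : M⁻¹ 2 j2 ^ 3 * M.mulVec (PP 0 1) j2 ^ 3 = -1 := by
      rw [← mul_pow, A21]
      norm_num
    have hB3 : M⁻¹ 0 j0 ^ 3 * M.mulVec (PP 1 1) j0 ^ 3 = 1 := by
      rw [← mul_pow, B01, one_pow]
    have hB3' : M⁻¹ 2 j2 ^ 3 * M.mulVec (PP 1 1) j2 ^ 3 = -1 := by
      rw [← mul_pow, B21]
      norm_num
    have hk12 : M⁻¹ 1 j1 ^ 3 = M⁻¹ 2 j2 ^ 3 := by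
      apply mul_right_cancel₀ (pow_ne_zero 3 hn11)
      rw [hA3]
      linear_combination hA3' - M⁻¹ 2 j2 ^ 3 * hsumA
    have hk02 : M⁻¹ 0 j0 ^ 3 = M⁻¹ 2 j2 ^ 3 := by
      apply mul_right_cancel₀ (pow_ne_zero 3 hn20)
      rw [hB3]
      linear_combination hB3' - M⁻¹ 2 j2 ^ 3 * hsumB
    have hpermS := sum3_perm hj01 hj02 hj12
      (fun r => (M⁻¹ 0 r * v 0 + M⁻¹ 1 r * v 1 + M⁻¹ 2 r * v 2) ^ 3)
    have hpermP := prod3_perm hj01 hj02 hj12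
      (fun r => M⁻¹ 0 r * v 0 + M⁻¹ 1 r * v 1 + M⁻¹ 2 r * v 2)
    refine ⟨?_, ?_⟩
    · rw [hX 0, hX 1, hX 2, hpermS, hb0 j1 (Ne.symm hj01), hb0 j2 (Ne.symm hj02),
        hb1 j0 hj01, hb1 j2 (Ne.symm hj12), hb2 j0 hj02, hb2 j1 hj12]
      linear_combination v 0 ^ 3 * hk02 + v 1 ^ 3 * hk12 + M⁻¹ 2 j2 ^ 3 * hv1
    · rw [hX 0, hX 1, hX 2, hpermP, hb0 j1 (Ne.symm hj01), hb0 j2 (Ne.symm hj02),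
        hb1 j0 hj01, hb1 j2 (Ne.symm hj12), hb2 j0 hj02, hb2 j1 hj12]
      linear_combination (M⁻¹ 0 j0 * M⁻¹ 1 j1 * M⁻¹ 2 j2) * hv2
  · exact (hmix 0 2 (by decide) hB0 hT2).elim
  · exact (hmix 0 1 (by decide) hB0 hT1).elim
  · exact (hmix 0 1 (by decide) hB0 hT1).elim
  · exact (hmix 1 0 (by decide) hB1 hT0).elim
  · exact (hmix 1 0 (by decide) hB1 hT0).elim
  · exact (hmix 2 0 (by decide) hB2 hT0).elim
  · -- all transversal: case B
    obtain ⟨α0, γ0, hα0, hγ0, hw0, h10, h00⟩ := hT0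
    obtain ⟨α1, γ1, hα1, hγ1, hw1, h11, h01⟩ := hT1
    obtain ⟨α2, γ2, hα2, hγ2, hw2, h12, h02⟩ := hT2
    have pig0 := pigeon
      (trans_points hα0 hw0 h10 h00 (hqne 0 1) (hq 0 1 (one_pow 3))
        ((hdot 0 (PP 0 1)).trans PP_self))
      (trans_points hα0 hw0 h10 h00 (hqne 0 ω) (hq 0 ω hω3)
        ((hdot 0 (PP 0 ω)).trans PP_self))
      (trans_points hα0 hw0 h10 h00 (hqne 0 (ω ^ 2)) (hq 0 (ω ^ 2) hcω2)
        ((hdot 0 (PP 0 (ω ^ 2))).trans PP_self))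
      (hqnp_mu 0 1 ω (Ne.symm hω1)) (hqnp_mu 0 1 (ω ^ 2) (Ne.symm hωsq1))
      (hqnp_mu 0 ω (ω ^ 2) hωω2)
    have pig1 := pigeon
      (trans_points hα1 hw1 h11 h01 (hqne 1 1) (hq 1 1 (one_pow 3))
        ((hdot 1 (PP 1 1)).trans PP_self))
      (trans_points hα1 hw1 h11 h01 (hqne 1 ω) (hq 1 ω hω3)
        ((hdot 1 (PP 1 ω)).trans PP_self))
      (trans_points hα1 hw1 h11 h01 (hqne 1 (ω ^ 2)) (hq 1 (ω ^ 2) hcω2)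
        ((hdot 1 (PP 1 (ω ^ 2))).trans PP_self))
      (hqnp_mu 1 1 ω (Ne.symm hω1)) (hqnp_mu 1 1 (ω ^ 2) (Ne.symm hωsq1))
      (hqnp_mu 1 ω (ω ^ 2) hωω2)
    have pig2 := pigeon
      (trans_points hα2 hw2 h12 h02 (hqne 2 1) (hq 2 1 (one_pow 3))
        ((hdot 2 (PP 2 1)).trans PP_self))
      (trans_points hα2 hw2 h12 h02 (hqne 2 ω) (hq 2 ω hω3)
        ((hdot 2 (PP 2 ω)).trans PP_self))
      (trans_points hα2 hw2 h12 h02 (hqne 2 (ω ^ 2)) (hq 2 (ω ^ 2) hcω2)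
        ((hdot 2 (PP 2 (ω ^ 2))).trans PP_self))
      (hqnp_mu 2 1 ω (Ne.symm hω1)) (hqnp_mu 2 1 (ω ^ 2) (Ne.symm hωsq1))
      (hqnp_mu 2 ω (ω ^ 2) hωω2)
    have hαne01 : α0 ≠ α1 := by
      intro h
      rw [h] at pig0
      rcases pig0.1 with hA | hA | hA <;> rcases pig1.1 with hB | hB | hB <;>
        exact (hqnp_type 0 1 _ _
          (by first | exact one_pow 3 | exact hω3 | exact hcω2) (by decide)
          (Rl_trans hA hB)).elim
    have hαne02 : α0 ≠ α2 := by
      intro h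
      rw [h] at pig0
      rcases pig0.1 with hA | hA | hA <;> rcases pig2.1 with hB | hB | hB <;>
        exact (hqnp_type 0 2 _ _
          (by first | exact one_pow 3 | exact hω3 | exact hcω2) (by decide)
          (Rl_trans hA hB)).elim
    have hαne12 : α1 ≠ α2 := by
      intro h
      rw [h] at pig1
      rcases pig1.1 with hA | hA | hA <;> rcases pig2.1 with hB | hB | hB <;>
        exact (hqnp_type 1 2 _ _
          (by first | exact one_pow 3 | exact hω3 | exact hcω2) (by decide)
          (Rl_trans hA hB)).elim
    have hδne01 : α0 * γ0 ≠ α1 * γ1 := by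
      intro h
      rw [h] at pig0
      rcases pig0.2.1 with hA | hA | hA <;> rcases pig1.2.1 with hB | hB | hB <;>
        exact (hqnp_type 0 1 _ _
          (by first | exact one_pow 3 | exact hω3 | exact hcω2) (by decide)
          (Rl_trans hA hB)).elim
    have hδne02 : α0 * γ0 ≠ α2 * γ2 := by
      intro h
      rw [h] at pig0
      rcases pig0.2.1 with hA | hA | hA <;> rcases pig2.2.1 with hB | hB | hB <;>
        exact (hqnp_type 0 2 _ _
          (by first | exact one_pow 3 | exact hω3 | exact hcω2) (by decide)
          (Rl_trans hA hB)).elim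
    have hδne12 : α1 * γ1 ≠ α2 * γ2 := by
      intro h
      rw [h] at pig1
      rcases pig1.2.1 with hA | hA | hA <;> rcases pig2.2.1 with hB | hB | hB <;>
        exact (hqnp_type 1 2 _ _
          (by first | exact one_pow 3 | exact hω3 | exact hcω2) (by decide)
          (Rl_trans hA hB)).elim
    have hγne01 : γ0 ≠ γ1 := by
      intro h
      rw [h] at pig0
      rcases pig0.2.2 with hA | hA | hA <;> rcases pig1.2.2 with hB | hB | hB <;>
        exact (hqnp_type 0 1 _ _
          (by first | exact one_pow 3 | exact hω3 | exact hcω2) (by decide)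
          (Rl_trans hA hB)).elim
    have hγne02 : γ0 ≠ γ2 := by
      intro h
      rw [h] at pig0
      rcases pig0.2.2 with hA | hA | hA <;> rcases pig2.2.2 with hB | hB | hB <;>
        exact (hqnp_type 0 2 _ _
          (by first | exact one_pow 3 | exact hω3 | exact hcω2) (by decide)
          (Rl_trans hA hB)).elim
    have hγne12 : γ1 ≠ γ2 := by
      intro h
      rw [h] at pig1
      rcases pig1.2.2 with hA | hA | hA <;> rcases pig2.2.2 with hB | hB | hB <;>
        exact (hqnp_type 1 2 _ _
          (by first | exact one_pow 3 | exact hω3 | exact hcω2) (by decide)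
          (Rl_trans hA hB)).elim
    -- ratios
    obtain ⟨r0, hγr0⟩ : ∃ r, γ0 = r * α0 := ⟨γ0 * α0 ^ 2, by linear_combination (-γ0) * hα0⟩
    obtain ⟨r1, hγr1⟩ : ∃ r, γ1 = r * α1 := ⟨γ1 * α1 ^ 2, by linear_combination (-γ1) * hα1⟩
    obtain ⟨r2, hγr2⟩ : ∃ r, γ2 = r * α2 := ⟨γ2 * α2 ^ 2, by linear_combination (-γ2) * hα2⟩
    have hr0c : r0 ^ 3 = 1 := by
      have h := hγ0
      rw [hγr0, mul_pow, hα0, mul_one] at h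
      exact h
    have hr1c : r1 ^ 3 = 1 := by
      have h := hγ1
      rw [hγr1, mul_pow, hα1, mul_one] at h
      exact h
    have hr2c : r2 ^ 3 = 1 := by
      have h := hγ2
      rw [hγr2, mul_pow, hα2, mul_one] at h
      exact h
    have hreq : r0 = r1 ∧ r0 = r2 := by
      by_cases h01r : r0 = r1
      · refine ⟨h01r, ?_⟩
        have hg0 : r2 * α2 ≠ r0 * α0 := by
          rw [← hγr2, ← hγr0]
          exact Ne.symm hγne02
        have hg1 : r2 * α2 ≠ r0 * α1 := by
          rw [← hγr2, h01r, ← hγr1]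
          exact Ne.symm hγne12
        exact (third_eq hω hα0 hα1 hα2 hr0c hr2c hαne01 hαne02 hαne12 hg0 hg1).symm
      · by_cases h02r : r0 = r2
        · refine ⟨?_, h02r⟩
          have hg0 : r1 * α1 ≠ r0 * α0 := by
            rw [← hγr1, ← hγr0]
            exact Ne.symm hγne01
          have hg1 : r1 * α1 ≠ r0 * α2 := by
            rw [← hγr1, h02r, ← hγr2]
            exact hγne12
          exact (third_eq hω hα0 hα2 hα1 hr0c hr1c hαne02 hαne01 (Ne.symm hαne12) hg0 hg1).symm
        · by_cases h12r : r1 = r2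
          · have hg0 : r0 * α0 ≠ r1 * α1 := by
              rw [← hγr0, ← hγr1]
              exact hγne01
            have hg1 : r0 * α0 ≠ r1 * α2 := by
              rw [← hγr0, h12r, ← hγr2]
              exact hγne02
            have h := third_eq hω hα1 hα2 hα0 hr1c hr0c hαne12 (Ne.symm hαne01)
              (Ne.symm hαne02) hg0 hg1
            exact ⟨h, h.trans h12r⟩
          · exfalso
            have hδ0c : (α0 * γ0) ^ 3 = 1 := by rw [mul_pow, hα0, hγ0, one_mul]
            have hδ1c : (α1 * γ1) ^ 3 = 1 := by rw [mul_pow, hα1, hγ1, one_mul]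
            have hδ2c : (α2 * γ2) ^ 3 = 1 := by rw [mul_pow, hα2, hγ2, one_mul]
            have hsr := (sym3 hr0c hr1c hr2c h01r h02r h12r).1
            have hsγ := (sym3 hγ0 hγ1 hγ2 hγne01 hγne02 hγne12).1
            have hsδ := (sym3 hδ0c hδ1c hδ2c hδne01 hδne02 hδne12).1
            rw [hγr0, hγr1, hγr2] at hsγ hsδ
            have hzero : r0 * ((α0 - α1) * (α0 - α2)) = 0 := by
              linear_combination hsδ - (α1 + α2) * hsγ + (α1 * α2) * hsr
            rcases mul_eq_zero.mp hzero with h | h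
            · exact cube_ne_zero hr0c h
            · rcases mul_eq_zero.mp h with h' | h'
              · exact hαne01 (sub_eq_zero.mp h')
              · exact hαne02 (sub_eq_zero.mp h')
    obtain ⟨hre1, hre2⟩ := hreq
    -- rewrite the rows of M⁻¹
    have h00' : M⁻¹ 0 0 = r0 * α0 ^ 2 * M⁻¹ 0 2 := by
      rw [h00, hγr0]
      ring
    have h01' : M⁻¹ 1 0 = r0 * α1 ^ 2 * M⁻¹ 1 2 := by
      rw [h01, hγr1, ← hre1]
      ring
    have h02' : M⁻¹ 2 0 = r0 * α2 ^ 2 * M⁻¹ 2 2 := by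
      rw [h02, hγr2, ← hre2]
      ring
    -- symmetric functions of the α's
    obtain ⟨e1e, e2e, e3e⟩ := sym3 hα0 hα1 hα2 hαne01 hαne02 hαne12
    -- cube relations between the M⁻¹ i 2
    have hq1 := hq 0 1 (one_pow 3)
    have hq2 := hq 1 1 (one_pow 3)
    have p010 : (PP 0 1 : Fin 3 → k) 0 = 0 := by simp [PP]
    have p011 : (PP 0 1 : Fin 3 → k) 1 = 1 := by simp [PP]
    have p012 : (PP 0 1 : Fin 3 → k) 2 = -1 := by simp [PP]
    have p110 : (PP 1 1 : Fin 3 → k) 0 = 1 := by simp [PP]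
    have p111 : (PP 1 1 : Fin 3 → k) 1 = 0 := by simp [PP]
    have p112 : (PP 1 1 : Fin 3 → k) 2 = -1 := by simp [PP]
    have hd00 : M⁻¹ 0 2 * (r0 * α0 ^ 2 * M.mulVec (PP 0 1) 0 + α0 * M.mulVec (PP 0 1) 1
        + M.mulVec (PP 0 1) 2) = 0 := by
      have hd := hdot 0 (PP 0 1)
      rw [h00', h10, p010] at hd
      linear_combination hd
    have hd01 : M⁻¹ 1 2 * (r0 * α1 ^ 2 * M.mulVec (PP 0 1) 0 + α1 * M.mulVec (PP 0 1) 1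
        + M.mulVec (PP 0 1) 2) = 1 := by
      have hd := hdot 1 (PP 0 1)
      rw [h01', h11, p011] at hd
      linear_combination hd
    have hd02 : (-(M⁻¹ 2 2)) * (r0 * α2 ^ 2 * M.mulVec (PP 0 1) 0 + α2 * M.mulVec (PP 0 1) 1
        + M.mulVec (PP 0 1) 2) = 1 := by
      have hd := hdot 2 (PP 0 1)
      rw [h02', h12, p012] at hd
      linear_combination -hd
    have hd10 : M⁻¹ 0 2 * (r0 * α0 ^ 2 * M.mulVec (PP 1 1) 0 + α0 * M.mulVec (PP 1 1) 1
        + M.mulVec (PP 1 1) 2) = 1 := by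
      have hd := hdot 0 (PP 1 1)
      rw [h00', h10, p110] at hd
      linear_combination hd
    have hd11 : M⁻¹ 1 2 * (r0 * α1 ^ 2 * M.mulVec (PP 1 1) 0 + α1 * M.mulVec (PP 1 1) 1
        + M.mulVec (PP 1 1) 2) = 0 := by
      have hd := hdot 1 (PP 1 1)
      rw [h01', h11, p111] at hd
      linear_combination hd
    have hd12 : (-(M⁻¹ 2 2)) * (r0 * α2 ^ 2 * M.mulVec (PP 1 1) 0 + α2 * M.mulVec (PP 1 1) 1
        + M.mulVec (PP 1 1) 2) = 1 := by
      have hd := hdot 2 (PP 1 1)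
      rw [h02', h12, p112] at hd
      linear_combination -hd
    have hid3A := id3 (x := M.mulVec (PP 0 1) 0) (y := M.mulVec (PP 0 1) 1)
      (z := M.mulVec (PP 0 1) 2) e1e e2e e3e hr0c
    have hid3B := id3 (x := M.mulVec (PP 1 1) 0) (y := M.mulVec (PP 1 1) 1)
      (z := M.mulVec (PP 1 1) 2) e1e e2e e3e hr0c
    have hF0 : r0 * α0 ^ 2 * M.mulVec (PP 0 1) 0 + α0 * M.mulVec (PP 0 1) 1
        + M.mulVec (PP 0 1) 2 = 0 := (mul_eq_zero.mp hd00).resolve_left hw0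
    have hG1 : r0 * α1 ^ 2 * M.mulVec (PP 1 1) 0 + α1 * M.mulVec (PP 1 1) 1
        + M.mulVec (PP 1 1) 2 = 0 := (mul_eq_zero.mp hd11).resolve_left hw1
    have hsumF : (r0 * α1 ^ 2 * M.mulVec (PP 0 1) 0 + α1 * M.mulVec (PP 0 1) 1
        + M.mulVec (PP 0 1) 2) ^ 3 + (r0 * α2 ^ 2 * M.mulVec (PP 0 1) 0
        + α2 * M.mulVec (PP 0 1) 1 + M.mulVec (PP 0 1) 2) ^ 3 = 0 := by
      rw [hF0] at hid3A
      linear_combination hid3A + 3 * hq1.1 + 18 * r0 * hq1.2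
    have hsumG : (r0 * α0 ^ 2 * M.mulVec (PP 1 1) 0 + α0 * M.mulVec (PP 1 1) 1
        + M.mulVec (PP 1 1) 2) ^ 3 + (r0 * α2 ^ 2 * M.mulVec (PP 1 1) 0
        + α2 * M.mulVec (PP 1 1) 1 + M.mulVec (PP 1 1) 2) ^ 3 = 0 := by
      rw [hG1] at hid3B
      linear_combination hid3B + 3 * hq2.1 + 18 * r0 * hq2.2
    have hF1ne : (r0 * α1 ^ 2 * M.mulVec (PP 0 1) 0 + α1 * M.mulVec (PP 0 1) 1
        + M.mulVec (PP 0 1) 2) ≠ 0 := right_ne_zero_of_mul_eq_one hd01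
    have hG0ne : (r0 * α0 ^ 2 * M.mulVec (PP 1 1) 0 + α0 * M.mulVec (PP 1 1) 1
        + M.mulVec (PP 1 1) 2) ≠ 0 := right_ne_zero_of_mul_eq_one hd10
    have hcube1 : M⁻¹ 1 2 ^ 3 * (r0 * α1 ^ 2 * M.mulVec (PP 0 1) 0 + α1 * M.mulVec (PP 0 1) 1
        + M.mulVec (PP 0 1) 2) ^ 3 = 1 := by
      rw [← mul_pow, hd01, one_pow]
    have hcube2 : (-(M⁻¹ 2 2)) ^ 3 * (r0 * α2 ^ 2 * M.mulVec (PP 0 1) 0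
        + α2 * M.mulVec (PP 0 1) 1 + M.mulVec (PP 0 1) 2) ^ 3 = 1 := by
      rw [← mul_pow, hd02, one_pow]
    have hcube0 : M⁻¹ 0 2 ^ 3 * (r0 * α0 ^ 2 * M.mulVec (PP 1 1) 0 + α0 * M.mulVec (PP 1 1) 1
        + M.mulVec (PP 1 1) 2) ^ 3 = 1 := by
      rw [← mul_pow, hd10, one_pow]
    have hcube2' : (-(M⁻¹ 2 2)) ^ 3 * (r0 * α2 ^ 2 * M.mulVec (PP 1 1) 0
        + α2 * M.mulVec (PP 1 1) 1 + M.mulVec (PP 1 1) 2) ^ 3 = 1 := by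
      rw [← mul_pow, hd12, one_pow]
    have hc12 : M⁻¹ 1 2 ^ 3 = M⁻¹ 2 2 ^ 3 := by
      apply mul_right_cancel₀ (pow_ne_zero 3 hF1ne)
      rw [hcube1]
      linear_combination -hcube2 - M⁻¹ 2 2 ^ 3 * hsumF
    have hc02 : M⁻¹ 0 2 ^ 3 = M⁻¹ 2 2 ^ 3 := by
      apply mul_right_cancel₀ (pow_ne_zero 3 hG0ne)
      rw [hcube0]
      linear_combination -hcube2' - M⁻¹ 2 2 ^ 3 * hsumG
    -- final verification
    have hid1 := id1 (y0 := M⁻¹ 0 2 * v 0) (y1 := M⁻¹ 1 2 * v 1) (y2 := M⁻¹ 2 2 * v 2)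
      e1e e2e e3e
    have hid2 := id2 (y0 := M⁻¹ 0 2 * v 0) (y1 := M⁻¹ 1 2 * v 1) (y2 := M⁻¹ 2 2 * v 2)
      e1e e2e e3e
    refine ⟨?_, ?_⟩
    · rw [hX 0, hX 1, hX 2, h00', h01', h02', h10, h11, h12]
      linear_combination (α0 ^ 2 * (M⁻¹ 0 2 * v 0) + α1 ^ 2 * (M⁻¹ 1 2 * v 1)
          + α2 ^ 2 * (M⁻¹ 2 2 * v 2)) ^ 3 * hr0c + hid1
        + 3 * v 0 ^ 3 * hc02 + 3 * v 1 ^ 3 * hc12 + 3 * M⁻¹ 2 2 ^ 3 * hv1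
        + 18 * (M⁻¹ 0 2 * M⁻¹ 1 2 * M⁻¹ 2 2) * hv2
    · rw [hX 0, hX 1, hX 2, h00', h01', h02', h10, h11, h12]
      linear_combination r0 * hid2 + r0 * v 0 ^ 3 * hc02 + r0 * v 1 ^ 3 * hc12
        + r0 * M⁻¹ 2 2 ^ 3 * hv1 - 3 * r0 * (M⁻¹ 0 2 * M⁻¹ 1 2 * M⁻¹ 2 2) * hv2

end FS7

/-- if the projective transformation of `ℙ²(k)` induced by `M ∈ GL₃(k)` maps
`Φ₀` into itself, then so does the projective transformation induced by the inverse
transpose `M⁻ᵀ`. -/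
theorem stabilizer_flexScheme0_invTranspose (k : Type*) [Field k] [IsAlgClosed k]
    (h3 : (3 : k) ≠ 0) (M : Matrix (Fin 3) (Fin 3) k) (hM : IsUnit M.det)
    (hMinj : Function.Injective (Matrix.toLin' M))
    (hMTinj : Function.Injective (Matrix.toLin' (M⁻¹)ᵀ))
    (hmaps : Set.MapsTo (Projectivization.map (Matrix.toLin' M) hMinj)
      (flexScheme0 k) (flexScheme0 k)) :
    Set.MapsTo (Projectivization.map (Matrix.toLin' (M⁻¹)ᵀ) hMTinj)
      (flexScheme0 k) (flexScheme0 k) := by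
  -- membership in flexScheme0 of mk v equals Phi v
  have hmem : ∀ (v : Fin 3 → k) (hv : v ≠ 0),
      Projectivization.mk k v hv ∈ flexScheme0 k ↔ FS7.Phi v := by
    intro v hv
    obtain ⟨a, ha⟩ := Projectivization.exists_smul_eq_mk_rep k v hv
    have : (Projectivization.mk k v hv).rep = (a : k) • v := ha.symm
    constructor
    · intro h
      have h' : FS7.Phi ((a : k) • v) := by
        rw [← this]; exact h
      exact (FS7.Phi_smul_iff a.ne_zero v).mp h'
    · intro h
      show FS7.Phi ((Projectivization.mk k v hv).rep)
      rw [this]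
      exact (FS7.Phi_smul_iff a.ne_zero v).mpr h
  have hstab : ∀ v : Fin 3 → k, v ≠ 0 → FS7.Phi v → FS7.Phi (M.mulVec v) := by
    intro v hv hphi
    have hmv : Matrix.toLin' M v ≠ 0 := fun h => hv (hMinj (by simpa using h))
    have h1 : Projectivization.mk k v hv ∈ flexScheme0 k := (hmem v hv).mpr hphi
    have h2 := hmaps h1
    rw [Projectivization.map_mk] at h2
    have := (hmem _ _).mp h2
    simpa [Matrix.toLin'_apply] using this
  intro P hP
  have hrep : FS7.Phi (P.rep) := hP
  have hPmk : Projectivization.mk k P.rep P.rep_nonzero = P := Projectivization.mk_rep P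
  rw [← hPmk]
  rw [Projectivization.map_mk]
  rw [hmem]
  have := FS7.core h3 M hM hstab P.rep hrep
  simpa [Matrix.toLin'_apply] using this

end
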